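/- For integers n, m ≥ 3, the F-index of the edge S-join of the cycle C_n and the cycle C_m is F(C_n ∨̱_S C_m) = n{(m + 2)³ + 6mn + mn²} + 12mn + 8m + 8n. -/

import Mathlib

/-- The subdivision graph `S(G)`: a new vertex is inserted into each edge of `G`
(each edge is replaced by a path of length 2). The inserted vertices form the
right summand `↥G.edgeSet`. -/
def Sgraph {V : Type*} (G : SimpleGraph V) : SimpleGraph (V ⊕ ↥G.edgeSet) where
  Adj x y :=
    match x, y with
    | Sum.inl v, Sum.inr e => v ∈ (e : Sym2 V)
    | Sum.inr e, Sum.inl v => v ∈ (e : Sym2 V)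
    | _, _ => False
  symm := by constructor; rintro (v | e) (w | f) h <;> exact h
  loopless := by constructor; rintro (v | e) h <;> exact h

/-- The graph `R(G)`: obtained from `G` by inserting a new vertex into each edge of `G`
and joining each new vertex to the end vertices of its corresponding edge. -/
def Rgraph {V : Type*} (G : SimpleGraph V) : SimpleGraph (V ⊕ ↥G.edgeSet) where
  Adj x y :=
    match x, y with
    | Sum.inl v, Sum.inl w => G.Adj v w
    | Sum.inl v, Sum.inr e => v ∈ (e : Sym2 V)
    | Sum.inr e, Sum.inl v => v ∈ (e : Sym2 V)
    | Sum.inr _, Sum.inr _ => False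
  symm := by
    constructor
    rintro (v | e) (w | f) h
    · exact G.adj_symm h
    · exact h
    · exact h
    · exact h
  loopless := by
    constructor
    rintro (v | e) h
    · exact G.irrefl h
    · exact h

/-- The graph `Q(G)`: obtained from `G` by inserting a new vertex into each edge of `G`,
then joining by edges those pairs of new vertices lying on adjacent edges of `G`. -/
def Qgraph {V : Type*} (G : SimpleGraph V) : SimpleGraph (V ⊕ ↥G.edgeSet) where
  Adj x y :=
    match x, y with
    | Sum.inl _, Sum.inl _ => False
    | Sum.inl v, Sum.inr e => v ∈ (e : Sym2 V)
    | Sum.inr e, Sum.inl v => v ∈ (e : Sym2 V)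
    | Sum.inr e, Sum.inr f => e ≠ f ∧ ∃ v, v ∈ (e : Sym2 V) ∧ v ∈ (f : Sym2 V)
  symm := by
    constructor
    rintro (v | e) (w | f) h
    · exact h
    · exact h
    · exact h
    · exact ⟨h.1.symm, by obtain ⟨v, h1, h2⟩ := h.2; exact ⟨v, h2, h1⟩⟩
  loopless := by
    constructor
    rintro (v | e) h
    · exact h
    · exact h.1 rfl

/-- The total graph `T(G)`: obtained from `G` by inserting a new vertex into each edge,
joining each new vertex to the end vertices of its corresponding edge, and joining by
edges those pairs of new vertices lying on adjacent edges of `G`. -/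
def Tgraph {V : Type*} (G : SimpleGraph V) : SimpleGraph (V ⊕ ↥G.edgeSet) where
  Adj x y :=
    match x, y with
    | Sum.inl v, Sum.inl w => G.Adj v w
    | Sum.inl v, Sum.inr e => v ∈ (e : Sym2 V)
    | Sum.inr e, Sum.inl v => v ∈ (e : Sym2 V)
    | Sum.inr e, Sum.inr f => e ≠ f ∧ ∃ v, v ∈ (e : Sym2 V) ∧ v ∈ (f : Sym2 V)
  symm := by
    constructor
    rintro (v | e) (w | f) h
    · exact G.adj_symm h
    · exact h
    · exact h
    · exact ⟨h.1.symm, by obtain ⟨v, h1, h2⟩ := h.2; exact ⟨v, h2, h1⟩⟩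
  loopless := by
    constructor
    rintro (v | e) h
    · exact G.irrefl h
    · exact h.1 rfl

/-- The disjoint union of `H` and `K` together with all edges joining a vertex `a` of `H`
with `P a` to every vertex of `K`. -/
def joinOn {A B : Type*} (H : SimpleGraph A) (K : SimpleGraph B) (P : A → Prop) :
    SimpleGraph (A ⊕ B) where
  Adj x y :=
    match x, y with
    | Sum.inl a, Sum.inl a' => H.Adj a a'
    | Sum.inr b, Sum.inr b' => K.Adj b b'
    | Sum.inl a, Sum.inr _ => P a
    | Sum.inr _, Sum.inl a => P a
  symm := by
    constructor
    rintro (a | b) (a' | b') h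
    · exact H.adj_symm h
    · exact h
    · exact h
    · exact K.adj_symm h
  loopless := by
    constructor
    rintro (a | b) h
    · exact H.irrefl h
    · exact K.irrefl h

/-- The vertex S-join `G₁ ∨̇_S G₂`: obtained from `S(G₁)` and `G₂` by joining each vertex
of `V(G₁)` to every vertex of `G₂`. -/
def vertexSJoin {V₁ V₂ : Type*} (G₁ : SimpleGraph V₁) (G₂ : SimpleGraph V₂) :
    SimpleGraph ((V₁ ⊕ ↥G₁.edgeSet) ⊕ V₂) :=
  joinOn (Sgraph G₁) G₂ (fun x => x.isLeft)

/-- The edge S-join `G₁ ∨̱_S G₂`: obtained from `S(G₁)` and `G₂` by joining each inserted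
vertex (each vertex of `I(G₁)`) to every vertex of `G₂`. -/
def edgeSJoin {V₁ V₂ : Type*} (G₁ : SimpleGraph V₁) (G₂ : SimpleGraph V₂) :
    SimpleGraph ((V₁ ⊕ ↥G₁.edgeSet) ⊕ V₂) :=
  joinOn (Sgraph G₁) G₂ (fun x => x.isRight)

/-- The vertex R-join `G₁ ∨̇_R G₂`. -/
def vertexRJoin {V₁ V₂ : Type*} (G₁ : SimpleGraph V₁) (G₂ : SimpleGraph V₂) :
    SimpleGraph ((V₁ ⊕ ↥G₁.edgeSet) ⊕ V₂) :=
  joinOn (Rgraph G₁) G₂ (fun x => x.isLeft)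

/-- The edge R-join `G₁ ∨̱_R G₂`. -/
def edgeRJoin {V₁ V₂ : Type*} (G₁ : SimpleGraph V₁) (G₂ : SimpleGraph V₂) :
    SimpleGraph ((V₁ ⊕ ↥G₁.edgeSet) ⊕ V₂) :=
  joinOn (Rgraph G₁) G₂ (fun x => x.isRight)

/-- The vertex Q-join `G₁ ∨̇_Q G₂`. -/
def vertexQJoin {V₁ V₂ : Type*} (G₁ : SimpleGraph V₁) (G₂ : SimpleGraph V₂) :
    SimpleGraph ((V₁ ⊕ ↥G₁.edgeSet) ⊕ V₂) :=
  joinOn (Qgraph G₁) G₂ (fun x => x.isLeft)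

/-- The edge Q-join `G₁ ∨̱_Q G₂`. -/
def edgeQJoin {V₁ V₂ : Type*} (G₁ : SimpleGraph V₁) (G₂ : SimpleGraph V₂) :
    SimpleGraph ((V₁ ⊕ ↥G₁.edgeSet) ⊕ V₂) :=
  joinOn (Qgraph G₁) G₂ (fun x => x.isRight)

/-- The vertex T-join `G₁ ∨̇_T G₂`. -/
def vertexTJoin {V₁ V₂ : Type*} (G₁ : SimpleGraph V₁) (G₂ : SimpleGraph V₂) :
    SimpleGraph ((V₁ ⊕ ↥G₁.edgeSet) ⊕ V₂) :=
  joinOn (Tgraph G₁) G₂ (fun x => x.isLeft)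

/-- The edge T-join `G₁ ∨̱_T G₂`. -/
def edgeTJoin {V₁ V₂ : Type*} (G₁ : SimpleGraph V₁) (G₂ : SimpleGraph V₂) :
    SimpleGraph ((V₁ ⊕ ↥G₁.edgeSet) ⊕ V₂) :=
  joinOn (Tgraph G₁) G₂ (fun x => x.isRight)

/-- Degree of a vertex in a graph on a finite vertex type. -/
noncomputable def gdeg {V : Type*} [Finite V] (G : SimpleGraph V) (v : V) : ℕ :=
  haveI : Fintype ↥(G.neighborSet v) := Fintype.ofFinite _
  G.degree v

/-- The forgotten topological index (F-index): `F(G) = ∑_{v ∈ V(G)} d_G(v)³`. -/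
noncomputable def Findex {V : Type*} [Finite V] (G : SimpleGraph V) : ℕ :=
  haveI := Fintype.ofFinite V
  ∑ v : V, gdeg G v ^ 3

/-- The first Zagreb index: `M₁(G) = ∑_{v ∈ V(G)} d_G(v)²`. -/
noncomputable def M1 {V : Type*} [Finite V] (G : SimpleGraph V) : ℕ :=
  haveI := Fintype.ofFinite V
  ∑ v : V, gdeg G v ^ 2

/-- `M₄(G) = ∑_{v ∈ V(G)} d_G(v)⁴`. -/
noncomputable def M4 {V : Type*} [Finite V] (G : SimpleGraph V) : ℕ :=
  haveI := Fintype.ofFinite V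
  ∑ v : V, gdeg G v ^ 4

/-- The hyper Zagreb index: `HM(G) = ∑_{uv ∈ E(G)} (d_G(u) + d_G(v))²`. -/
noncomputable def HM {V : Type*} [Finite V] (G : SimpleGraph V) : ℕ :=
  haveI : Fintype ↥G.edgeSet := Fintype.ofFinite _
  ∑ e : ↥G.edgeSet,
    Sym2.lift ⟨fun u v => (gdeg G u + gdeg G v) ^ 2,
      fun u v => by dsimp only; rw [add_comm]⟩ (e : Sym2 V)

/-- The redefined Zagreb index:
`ReZM(G) = ∑_{uv ∈ E(G)} d_G(u) d_G(v) (d_G(u) + d_G(v))`. -/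
noncomputable def ReZM {V : Type*} [Finite V] (G : SimpleGraph V) : ℕ :=
  haveI : Fintype ↥G.edgeSet := Fintype.ofFinite _
  ∑ e : ↥G.edgeSet,
    Sym2.lift ⟨fun u v => gdeg G u * gdeg G v * (gdeg G u + gdeg G v),
      fun u v => by dsimp only; ring⟩ (e : Sym2 V)

/-- The number of edges of `G`. -/
noncomputable def numEdges {V : Type*} (G : SimpleGraph V) : ℕ :=
  Nat.card ↥G.edgeSet

/-! In `G₁ ∨̱_S G₂` an original vertex of `G₁` keeps its degree, an inserted vertex has degree
`2 + |V(G₂)|`, and a vertex `b` of `G₂` gains one neighbour per edge of `G₁`. For two cycles this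
gives `F = 8n + n(m + 2)³ + m(n + 2)³`, which expands to the stated polynomial. -/

open SimpleGraph

section Degree

variable {V : Type*} (G : SimpleGraph V)

lemma gdeg_eq_degree [Finite V] (v : V) [Fintype (G.neighborSet v)] : gdeg G v = G.degree v := by
  unfold gdeg
  congr
  exact Subsingleton.elim _ _

lemma gdeg_eq_ncard [Finite V] (v : V) : gdeg G v = (G.neighborSet v).ncard := by
  have := Fintype.ofFinite (G.neighborSet v)
  rw [gdeg_eq_degree, ← card_neighborSet_eq_degree, Set.ncard_eq_toFinset_card', Set.toFinset_card]

lemma SimpleGraph.IsRegularOfDegree.gdeg_eq [Fintype V] [DecidableRel G.Adj] {d : ℕ}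
    (h : G.IsRegularOfDegree d) (v : V) : gdeg G v = d := by
  rw [gdeg_eq_degree, h.degree_eq]

lemma Findex_eq_sum [Fintype V] : Findex G = ∑ v, gdeg G v ^ 3 := by
  unfold Findex
  congr
  exact Subsingleton.elim _ _

lemma Findex_of_isRegularOfDegree [Fintype V] [DecidableRel G.Adj] {d : ℕ}
    (h : G.IsRegularOfDegree d) : Findex G = Fintype.card V * d ^ 3 := by
  simp [Findex_eq_sum, h.gdeg_eq]

lemma two_mul_numEdges_of_isRegularOfDegree [Fintype V] [DecidableRel G.Adj] {d : ℕ}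
    (h : G.IsRegularOfDegree d) : 2 * numEdges G = Fintype.card V * d := by
  classical
  have := G.sum_degrees_eq_twice_card_edges
  simp only [h.degree_eq, Finset.sum_const, Finset.card_univ, smul_eq_mul] at this
  rw [this, numEdges, Nat.card_eq_fintype_card, edgeFinset_card]

end Degree

lemma Set.ncard_image_inl_union_image_inr {α β : Type*} {s : Set α} {t : Set β}
    (hs : s.Finite) (ht : t.Finite) :
    (Sum.inl '' s ∪ Sum.inr '' t : Set (α ⊕ β)).ncard = s.ncard + t.ncard := by
  rw [Set.ncard_union_eq Set.disjoint_image_inl_image_inr (hs.image _) (ht.image _),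
    Set.ncard_image_of_injective _ Sum.inl_injective,
    Set.ncard_image_of_injective _ Sum.inr_injective]

lemma Sym2.ncard_setOf_mem_of_not_isDiag {α : Type*} {z : Sym2 α} (hz : ¬z.IsDiag) :
    {a | a ∈ z}.ncard = 2 := by
  induction z using Sym2.ind with
  | _ a b =>
    have hab : a ≠ b := by simpa using hz
    have hset : {v | v ∈ s(a, b)} = {a, b} := by ext; simp
    rw [hset, Set.ncard_pair hab]

section JoinOn

variable {A B : Type*} (H : SimpleGraph A) (K : SimpleGraph B) (P : A → Prop)

lemma joinOn_neighborSet_inl (a : A) :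
    (joinOn H K P).neighborSet (Sum.inl a) =
      Sum.inl '' H.neighborSet a ∪ Sum.inr '' {_b | P a} := by
  ext (a' | b) <;> simp [joinOn, SimpleGraph.neighborSet]

lemma joinOn_neighborSet_inr (b : B) :
    (joinOn H K P).neighborSet (Sum.inr b) =
      Sum.inl '' {a | P a} ∪ Sum.inr '' K.neighborSet b := by
  ext (a | b') <;> simp [joinOn, SimpleGraph.neighborSet]

variable [Finite A] [Finite B]

lemma gdeg_joinOn_inl_of_pos {a : A} (ha : P a) :
    gdeg (joinOn H K P) (Sum.inl a) = gdeg H a + Nat.card B := by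
  rw [gdeg_eq_ncard, gdeg_eq_ncard, joinOn_neighborSet_inl,
    Set.ncard_image_inl_union_image_inr (Set.toFinite _) (Set.toFinite _)]
  simp [ha]

lemma gdeg_joinOn_inl_of_neg {a : A} (ha : ¬P a) :
    gdeg (joinOn H K P) (Sum.inl a) = gdeg H a := by
  rw [gdeg_eq_ncard, gdeg_eq_ncard, joinOn_neighborSet_inl]
  simp [ha, Set.ncard_image_of_injective _ Sum.inl_injective]

lemma gdeg_joinOn_inr (b : B) :
    gdeg (joinOn H K P) (Sum.inr b) = {a | P a}.ncard + gdeg K b := by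
  rw [gdeg_eq_ncard, gdeg_eq_ncard, joinOn_neighborSet_inr,
    Set.ncard_image_inl_union_image_inr (Set.toFinite _) (Set.toFinite _)]

end JoinOn

section Subdivision

variable {V : Type*} (G : SimpleGraph V)

lemma Sgraph_neighborSet_inl (v : V) :
    (Sgraph G).neighborSet (Sum.inl v) = Sum.inr '' {e : G.edgeSet | v ∈ (e : Sym2 V)} := by
  ext (w | e) <;> simp [Sgraph, SimpleGraph.neighborSet]

lemma Sgraph_neighborSet_inr (e : G.edgeSet) :
    (Sgraph G).neighborSet (Sum.inr e) = Sum.inl '' {v | v ∈ (e : Sym2 V)} := by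
  ext (w | f) <;> simp [Sgraph, SimpleGraph.neighborSet]

variable [Finite V]

lemma gdeg_Sgraph_inl (v : V) : gdeg (Sgraph G) (Sum.inl v) = gdeg G v := by
  classical
  have hinc : Subtype.val '' {e : G.edgeSet | v ∈ (e : Sym2 V)} = G.incidenceSet v := by
    ext e
    simp [incidenceSet, and_comm]
  rw [gdeg_eq_ncard, gdeg_eq_ncard, Sgraph_neighborSet_inl,
    Set.ncard_image_of_injective _ Sum.inr_injective,
    ← Set.ncard_image_of_injective _ Subtype.val_injective, hinc, ← Nat.card_coe_set_eq,
    ← Nat.card_coe_set_eq, Nat.card_congr (G.incidenceSetEquivNeighborSet v)]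

lemma gdeg_Sgraph_inr (e : G.edgeSet) : gdeg (Sgraph G) (Sum.inr e) = 2 := by
  rw [gdeg_eq_ncard, Sgraph_neighborSet_inr, Set.ncard_image_of_injective _ Sum.inl_injective,
    Sym2.ncard_setOf_mem_of_not_isDiag (G.not_isDiag_of_mem_edgeSet e.2)]

end Subdivision

section EdgeSJoin

variable {V₁ V₂ : Type*} [Finite V₁] [Finite V₂] (G₁ : SimpleGraph V₁) (G₂ : SimpleGraph V₂)

lemma gdeg_edgeSJoin_inl_inl (v : V₁) :
    gdeg (edgeSJoin G₁ G₂) (Sum.inl (Sum.inl v)) = gdeg G₁ v := by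
  rw [edgeSJoin, gdeg_joinOn_inl_of_neg _ _ _ (by simp), gdeg_Sgraph_inl]

lemma gdeg_edgeSJoin_inl_inr (e : G₁.edgeSet) :
    gdeg (edgeSJoin G₁ G₂) (Sum.inl (Sum.inr e)) = 2 + Nat.card V₂ := by
  rw [edgeSJoin, gdeg_joinOn_inl_of_pos _ _ _ (by simp), gdeg_Sgraph_inr]

lemma gdeg_edgeSJoin_inr (b : V₂) :
    gdeg (edgeSJoin G₁ G₂) (Sum.inr b) = numEdges G₁ + gdeg G₂ b := by
  have hI : {x : V₁ ⊕ G₁.edgeSet | x.isRight} = Set.range Sum.inr := by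
    ext (v | e) <;> simp
  rw [edgeSJoin, gdeg_joinOn_inr, hI, Set.ncard_range_of_injective Sum.inr_injective, numEdges]

end EdgeSJoin

lemma Findex_edgeSJoin {V₁ V₂ : Type*} [Fintype V₁] [Fintype V₂]
    (G₁ : SimpleGraph V₁) (G₂ : SimpleGraph V₂) :
    Findex (edgeSJoin G₁ G₂) = Findex G₁ + numEdges G₁ * (Fintype.card V₂ + 2) ^ 3 +
      ∑ b, (numEdges G₁ + gdeg G₂ b) ^ 3 := by
  classical
  simp only [Findex_eq_sum, Fintype.sum_sum_type, gdeg_edgeSJoin_inl_inl, gdeg_edgeSJoin_inl_inr,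
    gdeg_edgeSJoin_inr, Finset.sum_const, Finset.card_univ, smul_eq_mul, Nat.card_eq_fintype_card]
  rw [numEdges, Nat.card_eq_fintype_card]
  ring

lemma isRegularOfDegree_cycleGraph {n : ℕ} (hn : 3 ≤ n) : (cycleGraph n).IsRegularOfDegree 2 := by
  obtain ⟨k, rfl⟩ : ∃ k, n = k + 3 := ⟨n - 3, by omega⟩
  exact fun _ ↦ cycleGraph_degree_three_le

theorem Findex_edgeSJoin_ex12 (n m : ℕ) (hn : 3 ≤ n) (hm : 3 ≤ m) :
    (Findex (edgeSJoin (SimpleGraph.cycleGraph n) (SimpleGraph.cycleGraph m)) : ℤ) =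
      (n : ℤ) * (((m : ℤ) + 2) ^ 3 + 6 * (m : ℤ) * (n : ℤ) + (m : ℤ) * (n : ℤ) ^ 2) + 12 * (m : ℤ) * (n : ℤ) + 8 * (m : ℤ) + 8 * (n : ℤ) := by
  have hCn := isRegularOfDegree_cycleGraph hn
  have hCm := isRegularOfDegree_cycleGraph hm
  have hEn : numEdges (cycleGraph n) = n := by
    have := two_mul_numEdges_of_isRegularOfDegree _ hCn
    rw [Fintype.card_fin] at this
    omega
  rw [Findex_edgeSJoin, Findex_of_isRegularOfDegree _ hCn, hEn]
  simp only [hCm.gdeg_eq, Finset.sum_const, Finset.card_univ, Fintype.card_fin, smul_eq_mul]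
  push_cast
  ring
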